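/- Let 𝔰 = (s_1,…,s_r) be a tuple of positive integers and u = (u_1,…,u_r) ∈ F^r with |u_k| < q^{s_k·q/(q−1)} for every 1 ≤ k ≤ r. For a subset S ⊆ {1,…,r−1}, let B_1 < B_2 < ⋯ < B_{r−|S|} be the blocks of the partition of {1,…,r} into maximal runs of consecutive integers generated by identifying k with k+1 for each k ∈ S, and set 𝔰_S := (Σ_{k∈B_1} s_k, …, Σ_{k∈B_{r−|S|}} s_k) and u_S := (Π_{k∈B_1} u_k, …, Π_{k∈B_{r−|S|}} u_k). Then the family defining 𝔏i_{𝔰,u} and, for every S ⊆ {1,…,r−1}, the family defining 𝔏i⋆_{𝔰_S,u_S} are summable in F[[t]] for the product topology, and one has the inclusion–exclusion identity 𝔏i_{𝔰,u} = Σ_{S⊆{1,…,r−1}} (−1)^{|S|}·𝔏i⋆_{𝔰_S,u_S} in F[[t]]. (This is the identity, used in the proof of Lemma 5.2 of the paper, expressing a t-motivic Carlitz multiple polylogarithm as an alternating sum of t-motivic Carlitz multiple star polylogarithms at merged indices and merged points.) -/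

import Mathlib

open PowerSeries Filter Topology
open scoped ENNReal

noncomputable section

/-- The product (coefficientwise) topology on `PowerSeries F`. -/
instance psTop {F : Type*} [Semiring F] [TopologicalSpace F] :
    TopologicalSpace (PowerSeries F) :=
  TopologicalSpace.induced (fun φ (n : ℕ) => PowerSeries.coeff (R := F) n φ) inferInstance

variable {F : Type*} [Field F]

/-- `𝕃_i = (t-θ^q)⋯(t-θ^{q^i})` as a formal power series. -/
def LL (q : ℕ) (θ : F) (i : ℕ) : PowerSeries F :=
  ∏ m ∈ Finset.range i, (PowerSeries.X - PowerSeries.C (R := F) (θ ^ q ^ (m + 1)))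

/-- General term `u_1^{q^{i_1}}⋯u_r^{q^{i_r}}·(𝕃_{i_1}^{s_1}⋯𝕃_{i_r}^{s_r})⁻¹` of a
t-motivic Carlitz multiple (star) polylogarithm. -/
def polyLogTerm (q : ℕ) (θ : F) {r : ℕ} (s : Fin r → ℕ) (u : Fin r → F)
    (i : Fin r → ℕ) : PowerSeries F :=
  ∏ k, PowerSeries.C (R := F) (u k ^ q ^ i k) * (LL q θ (i k) ^ s k)⁻¹

/-!
Every coefficient of `𝕃ᵢ⁻¹` has norm at most `q^{-(q + q² + ⋯ + qⁱ)}`, so by the ultrametric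
inequality the `n`-th coefficient of the general term at `i ∈ ℕʳ` has norm at most
`∏ₖ ρₖ (‖uₖ‖ / ρₖ)^{iₖ}` with `ρₖ = q^{sₖ q/(q-1)}`. The hypothesis `‖uₖ‖ < ρₖ` makes this a
product of convergent geometric series, so every coefficient family is summable over all of `ℕʳ`,
in particular over any set of indices.

For the identity, compare coefficients. A non-increasing index constant on the blocks of a
composition `c` of `r` is the same as a non-increasing index on the blocks, and the merged term at
the latter is the original term at the former. Let `S(c)` be the set of positions merged by `c` and
`T(i)` the set of positions where `i` fails to decrease strictly. Then the star sum for `c` is the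
sum over non-increasing `i` with `S(c) ⊆ T(i)`, and `c ↦ S(c)` is a bijection onto the subsets of
`{1, …, r-1}` with `|S(c)| = r - c.length`. So in the alternating sum each non-increasing `i`
carries the weight `∑_{S ⊆ T(i)} (-1)^{|S|}`, which is `1` if `T(i) = ∅`, i.e. if `i` is strictly
decreasing, and `0` otherwise.
-/

section CoeffwiseTopology

variable {R ι : Type*} [Semiring R] [TopologicalSpace R] {f : ι → PowerSeries R}

theorem hasSum_iff_hasSum_coeff {g : PowerSeries R} :
    HasSum f g ↔ ∀ n, HasSum (fun i => coeff n (f i)) (coeff n g) := by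
  simp_rw [HasSum, ← map_sum]
  rw [nhds_induced, tendsto_comap_iff, tendsto_pi_nhds]
  rfl

theorem summable_of_summable_coeff (h : ∀ n, Summable fun i => coeff n (f i)) : Summable f :=
  ⟨mk fun n => ∑' i, coeff n (f i),
    hasSum_iff_hasSum_coeff.2 fun n => by simpa using (h n).hasSum⟩

theorem coeff_tsum [T2Space R] (h : Summable f) (n : ℕ) :
    coeff n (∑' i, f i) = ∑' i, coeff n (f i) :=
  (hasSum_iff_hasSum_coeff.1 h.hasSum n).tsum_eq.symm

end CoeffwiseTopology

namespace PowerSeries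

variable {k : Type*} [Field k]

theorem inv_X_sub_C {a : k} (ha : a ≠ 0) : (X - C a)⁻¹ = mk fun n => -a⁻¹ ^ (n + 1) := by
  refine ((eq_inv_iff_mul_eq_one (by simp [ha])).2 ?_).symm
  ext (_ | n)
  · simp [ha]
  · rw [mul_sub, map_sub, coeff_succ_mul_X, mul_comm, coeff_C_mul]
    simp only [coeff_mk, coeff_one, n.succ_ne_zero, if_false, pow_succ a⁻¹ (n + 1)]
    linear_combination a⁻¹ ^ (n + 1) * mul_inv_cancel₀ ha

theorem prod_inv_distrib {ι : Type*} (t : Finset ι) (f : ι → k⟦X⟧) :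
    ∏ i ∈ t, (f i)⁻¹ = (∏ i ∈ t, f i)⁻¹ := by
  classical
  induction t using Finset.induction_on with
  | empty => simp
  | insert a t ha ih =>
    rw [Finset.prod_insert ha, Finset.prod_insert ha, PowerSeries.mul_inv_rev, ih, mul_comm]

theorem inv_pow (φ : k⟦X⟧) (n : ℕ) : φ⁻¹ ^ n = (φ ^ n)⁻¹ := by
  simpa using prod_inv_distrib (Finset.range n) fun _ => φ

end PowerSeries

theorem inv_LL_pow (q : ℕ) (θ : F) (i s : ℕ) :
    (LL q θ i ^ s)⁻¹ = ∏ m ∈ Finset.range i, (X - C (θ ^ q ^ (m + 1)))⁻¹ ^ s := by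
  simp_rw [LL, ← Finset.prod_pow, ← PowerSeries.prod_inv_distrib, PowerSeries.inv_pow]

section UltrametricBounds

variable {K : Type*} [NormedField K]

theorem norm_coeff_inv_X_sub_C_le {a : K} (ha : 1 ≤ ‖a‖) (n : ℕ) :
    ‖coeff n (X - C a)⁻¹‖ ≤ ‖a‖⁻¹ := by
  have ha0 : a ≠ 0 := norm_pos_iff.1 (one_pos.trans_le ha)
  rw [PowerSeries.inv_X_sub_C ha0, coeff_mk, norm_neg, norm_pow, norm_inv]
  exact pow_le_of_le_one (by positivity) (inv_le_one_of_one_le₀ ha) n.succ_ne_zero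

variable [IsUltrametricDist K]

theorem norm_coeff_mul_le {φ ψ : K⟦X⟧} {a b : ℝ} (hφ : ∀ n, ‖coeff n φ‖ ≤ a)
    (hψ : ∀ n, ‖coeff n ψ‖ ≤ b) (n : ℕ) : ‖coeff n (φ * ψ)‖ ≤ a * b := by
  have ha : 0 ≤ a := (norm_nonneg _).trans (hφ 0)
  have hb : 0 ≤ b := (norm_nonneg _).trans (hψ 0)
  rw [coeff_mul]
  refine IsUltrametricDist.norm_sum_le_of_forall_le_of_nonneg (mul_nonneg ha hb) fun p _ => ?_
  rw [norm_mul]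
  exact mul_le_mul (hφ _) (hψ _) (norm_nonneg _) ha

theorem norm_coeff_prod_le {ι : Type*} (t : Finset ι) {f : ι → K⟦X⟧} {B : ι → ℝ}
    (hf : ∀ i ∈ t, ∀ n, ‖coeff n (f i)‖ ≤ B i) (n : ℕ) :
    ‖coeff n (∏ i ∈ t, f i)‖ ≤ ∏ i ∈ t, B i := by
  classical
  induction t using Finset.induction_on generalizing n with
  | empty => simp only [Finset.prod_empty, coeff_one]; split_ifs <;> simp
  | insert a t ha ih =>
    rw [Finset.prod_insert ha, Finset.prod_insert ha]
    exact norm_coeff_mul_le (hf a (t.mem_insert_self a))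
      (ih fun i hi => hf i (Finset.mem_insert_of_mem hi)) n

theorem norm_coeff_pow_le {φ : K⟦X⟧} {b : ℝ} (hφ : ∀ n, ‖coeff n φ‖ ≤ b) (s n : ℕ) :
    ‖coeff n (φ ^ s)‖ ≤ b ^ s := by
  simpa using norm_coeff_prod_le (Finset.range s) (fun _ _ => hφ) n

theorem norm_coeff_inv_LL_pow_le (q : ℕ) {θ : K} (hθ : 1 ≤ ‖θ‖) (i s n : ℕ) :
    ‖coeff n (LL q θ i ^ s)⁻¹‖ ≤ (∏ m ∈ Finset.range i, (‖θ‖ ^ q ^ (m + 1)) ^ s)⁻¹ := by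
  rw [inv_LL_pow, ← Finset.prod_inv_distrib]
  refine norm_coeff_prod_le _ (fun m _ => ?_) n
  rw [← _root_.inv_pow, ← norm_pow]
  exact norm_coeff_pow_le (norm_coeff_inv_X_sub_C_le (by rw [norm_pow]; exact one_le_pow₀ hθ)) s

end UltrametricBounds

def polyLogRadius (q s : ℕ) : ℝ := (q : ℝ) ^ ((s : ℝ) * q / (q - 1))

section Radius

variable {q : ℕ}

theorem polyLogRadius_pos (hq : 0 < q) (s : ℕ) : 0 < polyLogRadius q s :=
  Real.rpow_pos_of_pos (by exact_mod_cast hq) _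

theorem polyLogRadius_sum (hq : 0 < q) {ι : Type*} (t : Finset ι) (s : ι → ℕ) :
    polyLogRadius q (∑ j ∈ t, s j) = ∏ j ∈ t, polyLogRadius q (s j) := by
  unfold polyLogRadius
  rw [← Real.rpow_sum_of_pos (by exact_mod_cast hq)]
  push_cast
  rw [Finset.sum_mul, Finset.sum_div]

theorem polyLogRadius_pow_eq_prod (hq : 2 ≤ q) (s i : ℕ) :
    polyLogRadius q s ^ (q ^ i - 1) = ∏ m ∈ Finset.range i, ((q : ℝ) ^ q ^ (m + 1)) ^ s := by
  have hq1 : (q : ℝ) - 1 ≠ 0 := by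
    rw [sub_ne_zero]; exact_mod_cast (by omega : q ≠ 1)
  simp_rw [← pow_mul]
  rw [Finset.prod_pow_eq_pow_sum, polyLogRadius, ← Real.rpow_natCast,
    ← Real.rpow_mul (by positivity), ← Real.rpow_natCast]
  congr 1
  push_cast [Nat.one_le_pow i q (by omega)]
  rw [← geom_sum_mul, Finset.sum_mul, Finset.mul_sum]
  field_simp
  refine Finset.sum_congr rfl fun m _ => by ring

end Radius

theorem pow_div_pow_pred_le {x ρ : ℝ} (hx : 0 ≤ x) (hρ : 0 < ρ) (hxρ : x ≤ ρ) {i N : ℕ}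
    (hiN : i ≤ N) (hN : 1 ≤ N) : x ^ N / ρ ^ (N - 1) ≤ ρ * (x / ρ) ^ i := by
  calc x ^ N / ρ ^ (N - 1) = ρ * (x / ρ) ^ N := by
        rw [div_pow, ← Nat.sub_add_cancel hN, pow_succ ρ]; field_simp; simp
    _ ≤ ρ * (x / ρ) ^ i := by
        gcongr ρ * ?_
        exact pow_le_pow_of_le_one (by positivity) ((div_le_one hρ).2 hxρ) hiN

section Summability

variable {K : Type*} [NormedField K] [IsUltrametricDist K] {q : ℕ} {θ : K} {r : ℕ}

theorem norm_coeff_polyLogTerm_le (hq : 2 ≤ q) (hθ : ‖θ‖ = q) (s : Fin r → ℕ) {u : Fin r → K}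
    (hu : ∀ k, ‖u k‖ ≤ polyLogRadius q (s k)) (n : ℕ) (i : Fin r → ℕ) :
    ‖coeff n (polyLogTerm q θ s u i)‖
      ≤ ∏ k, polyLogRadius q (s k) * (‖u k‖ / polyLogRadius q (s k)) ^ i k := by
  refine norm_coeff_prod_le _ (fun k _ m => ?_) n
  have hθ1 : 1 ≤ ‖θ‖ := by rw [hθ]; exact_mod_cast (by omega : 1 ≤ q)
  rw [coeff_C_mul, norm_mul, norm_pow]
  calc ‖u k‖ ^ q ^ i k * ‖coeff m (LL q θ (i k) ^ s k)⁻¹‖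
      ≤ ‖u k‖ ^ q ^ i k / polyLogRadius q (s k) ^ (q ^ i k - 1) := by
        rw [div_eq_mul_inv, polyLogRadius_pow_eq_prod hq, ← hθ]
        gcongr
        exact norm_coeff_inv_LL_pow_le q hθ1 _ _ _
    _ ≤ _ := pow_div_pow_pred_le (norm_nonneg _) (polyLogRadius_pos (by omega) _) (hu k)
        (Nat.lt_pow_self (by omega)).le (Nat.one_le_pow _ _ (by omega))

theorem summable_pi_prod_of_nonneg {β : Type*} {n : ℕ} {g : Fin n → β → ℝ}
    (hg : ∀ k, Summable (g k)) (h0 : ∀ k b, 0 ≤ g k b) :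
    Summable fun x : Fin n → β => ∏ k, g k (x k) := by
  induction n with
  | zero => exact .of_finite
  | succ n ih =>
    rw [← (Fin.consEquiv fun _ => β).summable_iff]
    simp only [Function.comp_def, Fin.consEquiv_apply, Fin.prod_univ_succ, Fin.cons_zero,
      Fin.cons_succ]
    have hprod := Summable.mul_of_nonneg (hg 0) (ih (fun k => hg k.succ) fun k => h0 k.succ) (h0 0)
      fun x => Finset.prod_nonneg fun k _ => h0 k.succ (x k)
    exact hprod

variable [CompleteSpace K]

theorem summable_coeff_polyLogTerm (hq : 2 ≤ q) (hθ : ‖θ‖ = q) (s : Fin r → ℕ) {u : Fin r → K}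
    (hu : ∀ k, ‖u k‖ < polyLogRadius q (s k)) (n : ℕ) :
    Summable fun i => coeff n (polyLogTerm q θ s u i) := by
  have hρ := fun k => polyLogRadius_pos (by omega : 0 < q) (s k)
  have hratio (k : Fin r) : 0 ≤ ‖u k‖ / polyLogRadius q (s k) :=
    div_nonneg (norm_nonneg _) (hρ k).le
  have hgeom (k : Fin r) : Summable fun m : ℕ =>
      polyLogRadius q (s k) * (‖u k‖ / polyLogRadius q (s k)) ^ m :=
    (summable_geometric_of_lt_one (hratio k) ((div_lt_one (hρ k)).2 (hu k))).mul_left _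
  refine .of_norm_bounded (summable_pi_prod_of_nonneg hgeom fun k m => ?_)
    (norm_coeff_polyLogTerm_le hq hθ s (fun k => (hu k).le) n)
  exact mul_nonneg (hρ k).le (pow_nonneg (hratio k) m)

theorem summable_polyLogTerm (hq : 2 ≤ q) (hθ : ‖θ‖ = q) (s : Fin r → ℕ) {u : Fin r → K}
    (hu : ∀ k, ‖u k‖ < polyLogRadius q (s k)) (p : (Fin r → ℕ) → Prop) :
    Summable fun i : {i // p i} => polyLogTerm q θ s u i.1 :=
  summable_of_summable_coeff fun n => (summable_coeff_polyLogTerm hq hθ s hu n).subtype _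

end Summability

theorem polyLogTerm_merge (q : ℕ) (θ : F) {r : ℕ} (s : Fin r → ℕ) (u : Fin r → F)
    (c : Composition r) (i : Fin c.length → ℕ) :
    polyLogTerm q θ (fun b => ∑ j, s (c.embedding b j)) (fun b => ∏ j, u (c.embedding b j)) i
      = polyLogTerm q θ s u (i ∘ c.index) := by
  rw [polyLogTerm, polyLogTerm, ← c.prod_prod_apply_embedding]
  refine Finset.prod_congr rfl fun b _ => ?_
  simp only [Function.comp_apply, c.index_embedding, ← Finset.prod_pow, map_prod,
    ← Finset.prod_pow_eq_pow_sum, ← PowerSeries.prod_inv_distrib, Finset.prod_mul_distrib]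

theorem norm_prod_lt_polyLogRadius_sum {K : Type*} [NormedField K] {q : ℕ} (hq : 0 < q)
    {ι : Type*} {t : Finset ι} (ht : t.Nonempty) {s : ι → ℕ} {u : ι → K}
    (hu : ∀ j ∈ t, ‖u j‖ < polyLogRadius q (s j)) :
    ‖∏ j ∈ t, u j‖ < polyLogRadius q (∑ j ∈ t, s j) := by
  rw [norm_prod, polyLogRadius_sum hq]
  rcases (Finset.prod_nonneg fun j _ => norm_nonneg (u j)).eq_or_lt with h | h
  · rw [← h]
    exact Finset.prod_pos fun j hj => (norm_nonneg _).trans_lt (hu j hj)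
  · refine Finset.prod_lt_prod_of_nonempty (fun j hj => ?_) hu ht
    exact (norm_nonneg _).lt_of_ne (Finset.prod_ne_zero_iff.1 h.ne' j hj).symm

def tieSet {m : ℕ} {α : Type*} [DecidableEq α] (j : Fin (m + 1) → α) : Finset (Fin m) :=
  {k | j k.castSucc = j k.succ}

theorem Antitone.strictAnti_iff_tieSet_eq_empty {m : ℕ} {α : Type*} [PartialOrder α] [DecidableEq α]
    {j : Fin (m + 1) → α} (hj : Antitone j) : StrictAnti j ↔ tieSet j = ∅ := by
  simp only [Fin.strictAnti_iff_succ_lt, Finset.eq_empty_iff_forall_notMem, tieSet,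
    Finset.mem_filter, Finset.mem_univ, true_and]
  exact forall_congr' fun k => by
    rw [lt_iff_le_and_ne, ne_comm]
    exact and_iff_right (Fin.antitone_iff_succ_le.1 hj k)

theorem card_boundaries_compositionAsSetEquiv_symm {m : ℕ} (S : Finset (Fin m)) :
    Finset.card ((compositionAsSetEquiv (m + 1)).symm S).boundaries = S.card + 2 := by
  have hS : ((compositionAsSetEquiv (m + 1)).symm S).boundaries
      = insert 0 (insert (Fin.last _) (S.map (Fin.castSuccEmb.trans (Fin.succEmb _)))) := by
    ext x
    rw [compositionAsSetEquiv, Equiv.coe_fn_symm_mk]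
    simp only [Set.toFinset_ofPred, Finset.mem_filter, Finset.mem_univ, true_and, Finset.mem_insert,
      Finset.mem_map, Function.Embedding.trans_apply, Fin.castSuccEmb_apply, Fin.coe_succEmb,
      exists_prop, Fin.ext_iff, Fin.val_succ, Fin.val_castSucc, eq_comm]
    exact Iff.rfl
  rw [hS, Finset.card_insert_of_notMem, Finset.card_insert_of_notMem, Finset.card_map]
  all_goals simp [Fin.ext_iff]
  exact fun x _ => x.isLt.ne

namespace Composition

section General

variable {n : ℕ} (c : Composition n)

theorem index_mono : Monotone c.index := fun _ _ hab =>
  Fin.le_def.2 <| Nat.find_mono fun _ hi => ⟨(Fin.le_def.1 hab).trans_lt hi.1, hi.2⟩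

theorem index_eq_iff {j : Fin n} {b : Fin c.length} :
    c.index j = b ↔ c.sizeUpTo b ≤ j ∧ j < c.sizeUpTo (b + 1) := by
  rw [eq_comm, ← mem_range_embedding_iff', mem_range_embedding_iff]

def blockStart (b : Fin c.length) : Fin n :=
  c.embedding b ⟨0, c.one_le_blocksFun b⟩

theorem coe_blockStart (b : Fin c.length) : (c.blockStart b : ℕ) = c.sizeUpTo b := by
  simp [blockStart, coe_embedding]

theorem index_blockStart (b : Fin c.length) : c.index (c.blockStart b) = b :=
  c.index_embedding b _

theorem blockStart_mono : Monotone c.blockStart := fun a b hab => by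
  rw [Fin.le_def, coe_blockStart, coe_blockStart]
  exact c.monotone_sizeUpTo hab

theorem blockStart_index_le (j : Fin n) : c.blockStart (c.index j) ≤ j := by
  rw [Fin.le_def, coe_blockStart]
  exact c.sizeUpTo_index_le j

theorem mem_boundaries_iff {x : Fin (n + 1)} :
    x ∈ c.boundaries ↔ ∃ b : Fin (c.length + 1), c.sizeUpTo b = x := by
  simp [boundaries, boundary, Fin.ext_iff]

end General

variable {m : ℕ} (c : Composition (m + 1))

theorem index_castSucc_ne_index_succ_iff (k : Fin m) :
    c.index k.castSucc ≠ c.index k.succ ↔ ∃ b : Fin (c.length + 1), c.sizeUpTo b = k + 1 := by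
  constructor
  · intro hne
    refine ⟨(c.index k.succ).castSucc, le_antisymm (c.sizeUpTo_index_le k.succ) ?_⟩
    by_contra! hlt
    refine hne ((c.index_eq_iff).2 ⟨?_, ?_⟩)
    · simp only [Fin.val_castSucc] at hlt ⊢
      omega
    · have := c.lt_sizeUpTo_index_succ k.succ
      simp only [Fin.val_castSucc, Fin.val_succ] at this ⊢
      omega
  · rintro ⟨b, hb⟩ heq
    have h1 := c.sizeUpTo_index_le k.castSucc
    have h2 := c.lt_sizeUpTo_index_succ k.succ
    rw [← heq] at h2
    simp only [Fin.val_castSucc, Fin.val_succ] at h1 h2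
    rcases le_or_gt (b : ℕ) (c.index k.castSucc) with h | h
    · have := c.monotone_sizeUpTo h
      omega
    · have : c.sizeUpTo (c.index k.castSucc + 1) ≤ c.sizeUpTo b := c.monotone_sizeUpTo h
      omega

-- The paper's `S ⊆ {1, …, r - 1}`, shifted down by one.
def mergeSet : Finset (Fin m) :=
  {k | c.index k.castSucc = c.index k.succ}

theorem mergeSet_eq_compl : c.mergeSet = (compositionAsSetEquiv (m + 1) c.toCompositionAsSet)ᶜ := by
  ext k
  simp [mergeSet, compositionAsSetEquiv, mem_boundaries_iff, ← index_castSucc_ne_index_succ_iff,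
    add_comm]

theorem card_mergeSet : c.mergeSet.card = m + 1 - c.length := by
  -- `(m := m)`: the equivalence lands in `Finset (Fin (m + 1 - 1))`.
  have h := card_boundaries_compositionAsSetEquiv_symm (m := m)
    (compositionAsSetEquiv (m + 1) c.toCompositionAsSet)
  rw [Equiv.symm_apply_apply, toCompositionAsSet_boundaries, card_boundaries_eq_succ_length] at h
  rw [mergeSet_eq_compl, Finset.card_compl, Fintype.card_fin]
  omega

theorem mergeSet_bijective : Function.Bijective (mergeSet (m := m)) := by
  have : mergeSet (m := m) = compl ∘ compositionAsSetEquiv (m + 1) ∘ compositionEquiv (m + 1) :=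
    funext mergeSet_eq_compl
  rw [this]
  exact compl_involutive.bijective.comp ((Equiv.bijective _).comp (Equiv.bijective _))

variable {α : Type*}

theorem apply_eq_of_index_eq [DecidableEq α] {j : Fin (m + 1) → α} (hj : c.mergeSet ⊆ tieSet j)
    {a b : Fin (m + 1)} (hab : a ≤ b) (h : c.index a = c.index b) : j a = j b := by
  induction b using Fin.induction with
  | zero => rw [Fin.le_zero_iff.1 hab]
  | succ k ih =>
    rcases hab.eq_or_lt with rfl | hlt
    · rfl
    have hak : a ≤ k.castSucc := Fin.le_castSucc_iff.2 hlt
    have hmerge : c.index k.castSucc = c.index k.succ :=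
      le_antisymm (c.index_mono (Fin.castSucc_le_succ k)) (h ▸ c.index_mono hak)
    rw [ih hak (h.trans hmerge.symm)]
    simpa [tieSet] using hj (by simpa [mergeSet] using hmerge)

def antitoneCompIndexEquiv [Preorder α] [DecidableEq α] :
    {i : Fin c.length → α // Antitone i}
      ≃ {j : Fin (m + 1) → α // Antitone j ∧ c.mergeSet ⊆ tieSet j} where
  toFun i := ⟨i.1 ∘ c.index, i.2.comp_monotone c.index_mono, fun k hk => by
    simp_all [mergeSet, tieSet]⟩
  invFun j := ⟨j.1 ∘ c.blockStart, j.2.1.comp_monotone c.blockStart_mono⟩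
  left_inv i := by ext b; simp [index_blockStart]
  right_inv j := by
    ext k
    exact c.apply_eq_of_index_eq j.2.2 (c.blockStart_index_le k) (c.index_blockStart _)

end Composition

theorem sum_composition_neg_one_pow_mul_indicator {m : ℕ} {α : Type*} [PartialOrder α]
    [DecidableEq α] {R : Type*} [CommRing R] (f : (Fin (m + 1) → α) → R) (j : Fin (m + 1) → α) :
    ∑ c : Composition (m + 1),
        (-1) ^ (m + 1 - c.length) * {j | Antitone j ∧ c.mergeSet ⊆ tieSet j}.indicator f j
      = {j | StrictAnti j}.indicator f j := by
  classical
  by_cases hj : Antitone j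
  swap
  · rw [Set.indicator_of_notMem fun h => hj h.antitone]
    exact Finset.sum_eq_zero fun c _ => by rw [Set.indicator_of_notMem fun h => hj h.1, mul_zero]
  have hpowerset :
      ∑ S ∈ (tieSet j).powerset, (-1 : R) ^ S.card = if tieSet j = ∅ then 1 else 0 := by
    exact_mod_cast congrArg (Int.cast : ℤ → R) Finset.sum_powerset_neg_one_pow_card
  simp only [Set.indicator_apply, Set.mem_ofPred_eq, hj, true_and, ← Composition.card_mergeSet]
  rw [Fintype.sum_bijective _ Composition.mergeSet_bijective _
    (fun S => (-1) ^ S.card * if S ⊆ tieSet j then f j else 0) fun c => rfl]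
  simp_rw [mul_ite, mul_zero]
  rw [← Finset.sum_filter, Finset.filter_subset_univ, ← Finset.sum_mul, hpowerset]
  simp [hj.strictAnti_iff_tieSet_eq_empty]

theorem tsum_strictAnti_eq_sum_composition {m : ℕ} {α : Type*} [PartialOrder α] {R : Type*}
    [CommRing R] [UniformSpace R] [IsUniformAddGroup R] [CompleteSpace R] [IsTopologicalRing R]
    [T2Space R] {f : (Fin (m + 1) → α) → R} (hf : Summable f) :
    ∑' i : {i : Fin (m + 1) → α // StrictAnti i}, f i
      = ∑ c : Composition (m + 1), (-1) ^ (m + 1 - c.length) *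
          ∑' i : {i : Fin c.length → α // Antitone i}, f (i.1 ∘ c.index) := by
  classical
  have hblock (c : Composition (m + 1)) :
      ∑' i : {i : Fin c.length → α // Antitone i}, f (i.1 ∘ c.index)
        = ∑' j, {j | Antitone j ∧ c.mergeSet ⊆ tieSet j}.indicator f j := by
    rw [← tsum_subtype]
    exact c.antitoneCompIndexEquiv.tsum_eq fun j => f j.1
  have hmul (c : Composition (m + 1)) (a : R) :
      a * ∑' j, {j | Antitone j ∧ c.mergeSet ⊆ tieSet j}.indicator f j
        = ∑' j, a * {j | Antitone j ∧ c.mergeSet ⊆ tieSet j}.indicator f j :=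
    ((hf.indicator _).tsum_mul_left a).symm
  simp_rw [hblock, hmul]
  rw [← Summable.tsum_finsetSum fun c _ => (hf.indicator _).mul_left _]
  exact (tsum_subtype {i | StrictAnti i} f).trans
    (tsum_congr fun j => (sum_composition_neg_one_pow_mul_indicator f j).symm)

theorem statement1_general
    {F : Type*} [NormedField F] [IsUltrametricDist F] [CompleteSpace F]
    (q : ℕ) (hq : IsPrimePow q) (θ : F) (hθ : ‖θ‖ = (q : ℝ))
    {r : ℕ} (hr : 0 < r) (s : Fin r → ℕ)
    (u : Fin r → F)
    (hu : ∀ k, ‖u k‖ < (q : ℝ) ^ ((s k : ℝ) * (q : ℝ) / ((q : ℝ) - 1))) :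
    Summable (fun i : {i : Fin r → ℕ // StrictAnti i} => polyLogTerm q θ s u i.1)
    ∧ (∀ c : Composition r,
        Summable (fun i : {i : Fin c.length → ℕ // Antitone i} =>
          polyLogTerm q θ (fun b => ∑ j, s (c.embedding b j))
            (fun b => ∏ j, u (c.embedding b j)) i.1))
    ∧ (∑' i : {i : Fin r → ℕ // StrictAnti i}, polyLogTerm q θ s u i.1)
        = ∑ c : Composition r,
            (-1 : PowerSeries F) ^ (r - c.length) *
              ∑' i : {i : Fin c.length → ℕ // Antitone i},
                polyLogTerm q θ (fun b => ∑ j, s (c.embedding b j))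
                  (fun b => ∏ j, u (c.embedding b j)) i.1 := by
  obtain ⟨m, rfl⟩ := Nat.exists_eq_add_one_of_ne_zero hr.ne'
  have hq2 := hq.two_le
  have hu_merged (c : Composition (m + 1)) (b : Fin c.length) :
      ‖∏ j, u (c.embedding b j)‖ < polyLogRadius q (∑ j, s (c.embedding b j)) :=
    norm_prod_lt_polyLogRadius_sum (by omega) ⟨⟨0, c.one_le_blocksFun b⟩, Finset.mem_univ _⟩
      fun j _ => hu _
  have hLi := summable_polyLogTerm hq2 hθ s hu StrictAnti
  have hLiStar (c : Composition (m + 1)) := summable_polyLogTerm hq2 hθ _ (hu_merged c) Antitone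
  refine ⟨hLi, hLiStar, ext fun n => ?_⟩
  have hsign (k : ℕ) (φ : F⟦X⟧) : coeff n ((-1) ^ k * φ) = (-1) ^ k * coeff n φ := by
    simpa using coeff_C_mul n φ ((-1) ^ k)
  have hLiStar_coeff (c : Composition (m + 1)) :
      coeff n (∑' i : {i : Fin c.length → ℕ // Antitone i}, polyLogTerm q θ
          (fun b => ∑ j, s (c.embedding b j)) (fun b => ∏ j, u (c.embedding b j)) i.1)
        = ∑' i : {i : Fin c.length → ℕ // Antitone i},
            coeff n (polyLogTerm q θ s u (i.1 ∘ c.index)) := by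
    rw [coeff_tsum (hLiStar c)]
    simp only [polyLogTerm_merge]
  simp only [coeff_tsum hLi, map_sum, hsign, hLiStar_coeff]
  exact tsum_strictAnti_eq_sum_composition (summable_coeff_polyLogTerm hq2 hθ s hu n)

/-- inclusion–exclusion identity used in Lemma 5.2 of the paper.
Subsets `S ⊆ {1,…,r−1}` (identifying `k` with `k+1` for `k ∈ S`, giving a partition of
`{1,…,r}` into maximal runs of consecutive integers) correspond exactly to compositions
`c` of `r`, the blocks being the blocks of the composition, with `|S| = r − c.length`.
The merged index is `𝔰_S = (Σ_{k∈B_b} s_k)_b` and the merged point is `u_S = (Π_{k∈B_b} u_k)_b`.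
The family defining `𝔏i_{𝔰,u}` and all the families defining `𝔏i⋆_{𝔰_S,u_S}` are summable in
`F[[t]]`, and `𝔏i_{𝔰,u} = Σ_S (−1)^{|S|}·𝔏i⋆_{𝔰_S,u_S}`. -/
theorem statement1
    {F : Type*} [NormedField F] [IsUltrametricDist F] [CompleteSpace F]
    (q : ℕ) (hq : IsPrimePow q) (θ : F) (hθ : ‖θ‖ = (q : ℝ))
    {r : ℕ} (hr : 0 < r) (s : Fin r → ℕ) (hs : ∀ k, 0 < s k)
    (u : Fin r → F)
    (hu : ∀ k, ‖u k‖ < (q : ℝ) ^ ((s k : ℝ) * (q : ℝ) / ((q : ℝ) - 1))) :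
    Summable (fun i : {i : Fin r → ℕ // StrictAnti i} => polyLogTerm q θ s u i.1)
    ∧ (∀ c : Composition r,
        Summable (fun i : {i : Fin c.length → ℕ // Antitone i} =>
          polyLogTerm q θ (fun b => ∑ j, s (c.embedding b j))
            (fun b => ∏ j, u (c.embedding b j)) i.1))
    ∧ (∑' i : {i : Fin r → ℕ // StrictAnti i}, polyLogTerm q θ s u i.1)
        = ∑ c : Composition r,
            (-1 : PowerSeries F) ^ (r - c.length) *
              ∑' i : {i : Fin c.length → ℕ // Antitone i},
                polyLogTerm q θ (fun b => ∑ j, s (c.embedding b j))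
                  (fun b => ∏ j, u (c.embedding b j)) i.1 :=
  statement1_general q hq θ hθ hr s u hu
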